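/- For any u, z ∈ ℂ⁴, one has ±⟨βz,z⟩⟨βu,u⟩ + Σ_{k=1}^{3} ⟨αₖz,z⟩⟨αₖu,u⟩ ≤ |z|²_{ℂ⁴} · |u|²_{ℂ⁴} (with either choice of sign in the first term). -/

import Mathlib

/-!
The matrices `±β, α₁, α₂, α₃` are Hermitian and satisfy the Clifford relations
`AᵢAⱼ + AⱼAᵢ = 2δᵢⱼ`. Hence for every real vector `c` the Hermitian matrix `M = ∑ cᵢAᵢ` squares
to `|c|²`, so `‖Mz‖ = |c|‖z‖` and, by Cauchy–Schwarz, `∑ cᵢ⟨Aᵢz,z⟩ = ⟨Mz,z⟩ ≤ |c|‖z‖²`.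
Taking `c = (⟨Aᵢz,z⟩)ᵢ` gives `|(⟨Aᵢz,z⟩)ᵢ| ≤ ‖z‖²`; applying the bound to `u` with the same `c`
bounds the left-hand side by `|(⟨Aᵢz,z⟩)ᵢ|‖u‖² ≤ ‖z‖²‖u‖²`.
-/

open Matrix

noncomputable def PauliMat : Fin 3 → Matrix (Fin 2) (Fin 2) ℂ
  | 0 => !![0, 1; 1, 0]
  | 1 => !![0, -Complex.I; Complex.I, 0]
  | 2 => !![1, 0; 0, -1]

/-- β = [[I,0],[0,-I]] as a 4×4 matrix. -/
noncomputable def DiracBeta : Matrix (Fin 4) (Fin 4) ℂ :=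
  (Matrix.reindex (finSumFinEquiv : Fin 2 ⊕ Fin 2 ≃ Fin 4) (finSumFinEquiv : Fin 2 ⊕ Fin 2 ≃ Fin 4))
    (Matrix.fromBlocks (1 : Matrix (Fin 2) (Fin 2) ℂ) 0 0 (-1))

/-- αₖ = [[0,σₖ],[σₖ,0]] as a 4×4 matrix. -/
noncomputable def DiracAlpha (k : Fin 3) : Matrix (Fin 4) (Fin 4) ℂ :=
  (Matrix.reindex (finSumFinEquiv : Fin 2 ⊕ Fin 2 ≃ Fin 4) (finSumFinEquiv : Fin 2 ⊕ Fin 2 ≃ Fin 4))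
    (Matrix.fromBlocks 0 (PauliMat k) (PauliMat k) 0)


/-- Hermitian inner product ⟨w, u⟩ = ∑ wᵢ ūᵢ on ℂ⁴. -/
noncomputable def hdot (w u : Fin 4 → ℂ) : ℂ := ∑ i, w i * starRingEnd ℂ (u i)


section Clifford

variable {ι R : Type*} [DecidableEq ι] [Ring R]

def IsCliffordFamily (a : ι → R) : Prop :=
  ∀ i j, a i * a j + a j * a i = if i = j then 2 else 0

theorem IsCliffordFamily.sum_smul_mul_self [Fintype ι] [Algebra ℝ R] {a : ι → R}
    (h : IsCliffordFamily a) (c : ι → ℝ) :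
    (∑ i, c i • a i) * (∑ i, c i • a i) = (∑ i, c i ^ 2) • 1 := by
  have hexpand : (∑ i, c i • a i) * (∑ i, c i • a i)
      = ∑ i, ∑ j, (c i * c j) • (a i * a j) := by
    simp only [Finset.sum_mul_sum, smul_mul_smul]
  have hswap : ∑ i, ∑ j, (c i * c j) • (a i * a j) = ∑ i, ∑ j, (c i * c j) • (a j * a i) := by
    rw [Finset.sum_comm]
    exact Finset.sum_congr rfl fun i _ => Finset.sum_congr rfl fun j _ => by rw [mul_comm]
  apply smul_right_injective R (two_ne_zero' ℝ)
  calc (2 : ℝ) • ((∑ i, c i • a i) * (∑ i, c i • a i))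
      = ∑ i, ∑ j, (c i * c j) • (a i * a j + a j * a i) := by
        rw [two_smul, hexpand]
        nth_rewrite 2 [hswap]
        simp only [← Finset.sum_add_distrib, smul_add]
    _ = (2 : ℝ) • ((∑ i, c i ^ 2) • 1) := by
        simp only [h _ _, smul_ite, smul_zero, Finset.sum_ite_eq, Finset.mem_univ, if_true,
          Finset.sum_smul, Finset.smul_sum, sq]
        refine Finset.sum_congr rfl fun i _ => ?_
        rw [smul_comm, two_smul, one_add_one_eq_two]

theorem IsCliffordFamily.map {S : Type*} [Ring S] {a : ι → R} (h : IsCliffordFamily a)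
    (f : R →+* S) : IsCliffordFamily (f ∘ a) := fun i j => by
  simpa [apply_ite f, map_ofNat] using congr_arg f (h i j)

theorem IsCliffordFamily.cons {n : ℕ} {a : Fin n → R} (ha : IsCliffordFamily a) {b : R}
    (hb : b * b = 1) (hab : ∀ i, b * a i + a i * b = 0) :
    IsCliffordFamily (Fin.cons b a : Fin (n + 1) → R) := by
  intro i j
  cases i using Fin.cases <;> cases j using Fin.cases <;>
    simp [hb, hab, ha _ _, add_comm (a _ * b), Fin.succ_ne_zero, (Fin.succ_ne_zero _).symm,
      one_add_one_eq_two]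

end Clifford

section Blocks

variable {ι n R : Type*} [DecidableEq ι] [Fintype n] [DecidableEq n] [Ring R]

theorem IsCliffordFamily.fromBlocks_antidiag {σ : ι → Matrix n n R} (h : IsCliffordFamily σ) :
    IsCliffordFamily fun i => fromBlocks 0 (σ i) (σ i) 0 := by
  intro i j
  rw [fromBlocks_multiply, fromBlocks_multiply, fromBlocks_add]
  simp only [h i j, mul_zero, zero_mul, add_zero, zero_add]
  split_ifs <;> ext (a | a) (b | b) <;> simp [ofNat_apply]

theorem fromBlocks_one_neg_one_mul_self :
    fromBlocks 1 0 0 (-1) * fromBlocks 1 0 0 (-1) = (1 : Matrix (n ⊕ n) (n ⊕ n) R) := by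
  simp [fromBlocks_multiply]

theorem fromBlocks_one_neg_one_anticomm (A : Matrix n n R) :
    fromBlocks 1 0 0 (-1) * fromBlocks 0 A A 0 + fromBlocks 0 A A 0 * fromBlocks 1 0 0 (-1) =
      0 := by
  simp [fromBlocks_multiply, fromBlocks_add]

end Blocks

section QuadraticForm

variable {ι m 𝕜 : Type*} [RCLike 𝕜] [Fintype m] [DecidableEq m]

theorem re_mulVec_dotProduct_star_le_of_mul_self_eq {M : Matrix m m 𝕜} (hM : M.IsHermitian)
    {r : ℝ} (hr : 0 ≤ r) (hMM : M * M = r ^ 2 • 1) (z : m → 𝕜) :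
    RCLike.re ((M *ᵥ z) ⬝ᵥ star z) ≤ r * ∑ i, ‖z i‖ ^ 2 := by
  have hnorm : ‖WithLp.toLp 2 (M *ᵥ z)‖ = r * ‖WithLp.toLp 2 z‖ := by
    rw [← sq_eq_sq₀ (norm_nonneg _) (by positivity), mul_pow, @norm_sq_eq_re_inner 𝕜,
      @norm_sq_eq_re_inner 𝕜, EuclideanSpace.inner_toLp_toLp, EuclideanSpace.inner_toLp_toLp,
      star_mulVec, dotProduct_comm, ← dotProduct_mulVec, mulVec_mulVec, hM.eq, hMM, smul_mulVec,
      one_mulVec, dotProduct_smul, RCLike.smul_re, dotProduct_comm]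
  calc RCLike.re ((M *ᵥ z) ⬝ᵥ star z)
      = RCLike.re (inner 𝕜 (WithLp.toLp 2 z) (WithLp.toLp 2 (M *ᵥ z))) := rfl
    _ ≤ ‖WithLp.toLp 2 z‖ * ‖WithLp.toLp 2 (M *ᵥ z)‖ := re_inner_le_norm _ _
    _ = r * ∑ i, ‖z i‖ ^ 2 := by
      rw [hnorm, ← EuclideanSpace.norm_sq_eq]; ring

variable [DecidableEq ι] [Fintype ι] {A : ι → Matrix m m 𝕜}

theorem IsCliffordFamily.sum_mul_re_le (hA : IsCliffordFamily A)
    (hherm : ∀ i, (A i).IsHermitian) (c : ι → ℝ) (z : m → 𝕜) :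
    ∑ i, c i * RCLike.re ((A i *ᵥ z) ⬝ᵥ star z) ≤ √(∑ i, c i ^ 2) * ∑ i, ‖z i‖ ^ 2 := by
  have hM : (∑ i, c i • A i).IsHermitian :=
    isSelfAdjoint_sum _ fun i _ => (hherm i).smul (IsSelfAdjoint.all (c i))
  have hMM := hA.sum_smul_mul_self c
  rw [← Real.sq_sqrt (Finset.sum_nonneg fun i _ => sq_nonneg (c i))] at hMM
  simpa [Matrix.sum_mulVec, smul_mulVec, sum_dotProduct, smul_dotProduct, RCLike.smul_re]
    using re_mulVec_dotProduct_star_le_of_mul_self_eq hM (Real.sqrt_nonneg _) hMM z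

theorem IsCliffordFamily.sqrt_sum_sq_re_le (hA : IsCliffordFamily A)
    (hherm : ∀ i, (A i).IsHermitian) (z : m → 𝕜) :
    √(∑ i, RCLike.re ((A i *ᵥ z) ⬝ᵥ star z) ^ 2) ≤ ∑ i, ‖z i‖ ^ 2 := by
  set q := fun i => RCLike.re ((A i *ᵥ z) ⬝ᵥ star z)
  have hS : 0 ≤ ∑ i, q i ^ 2 := Finset.sum_nonneg fun i _ => sq_nonneg (q i)
  have h : √(∑ i, q i ^ 2) * √(∑ i, q i ^ 2) ≤ √(∑ i, q i ^ 2) * ∑ i, ‖z i‖ ^ 2 := by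
    rw [Real.mul_self_sqrt hS]
    simpa only [sq] using hA.sum_mul_re_le hherm q z
  rcases (Real.sqrt_nonneg (∑ i, q i ^ 2)).eq_or_lt with h0 | hpos
  · rw [← h0]; positivity
  · exact le_of_mul_le_mul_left h hpos

end QuadraticForm

theorem isCliffordFamily_pauliMat : IsCliffordFamily PauliMat := by
  intro i j
  fin_cases i <;> fin_cases j <;> ext a b <;> fin_cases a <;> fin_cases b <;>
    simp [PauliMat, ofNat_apply, one_add_one_eq_two]

theorem isHermitian_pauliMat (k : Fin 3) : (PauliMat k).IsHermitian := by
  fin_cases k <;> ext a b <;> fin_cases a <;> fin_cases b <;> simp [PauliMat]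

noncomputable def diracFamily (s : ℝ) : Fin 4 → Matrix (Fin 4) (Fin 4) ℂ :=
  Fin.cons (s • DiracBeta) DiracAlpha

theorem isHermitian_diracFamily (s : ℝ) (i : Fin 4) : (diracFamily s i).IsHermitian := by
  cases i using Fin.cases with
  | zero =>
    refine IsHermitian.smul (show DiracBeta.IsHermitian from ?_) (IsSelfAdjoint.all s)
    exact (isHermitian_one.fromBlocks conjTranspose_zero isHermitian_one.neg).submatrix _
  | succ k =>
    exact .submatrix (isHermitian_zero.fromBlocks (isHermitian_pauliMat k) isHermitian_zero) _

theorem isCliffordFamily_diracFamily {s : ℝ} (hs : s ^ 2 = 1) :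
    IsCliffordFamily (diracFamily s) := by
  let f := (reindexRingEquiv ℂ (finSumFinEquiv : Fin 2 ⊕ Fin 2 ≃ Fin 4)).toRingHom
  have hβ : DiracBeta = f (fromBlocks 1 0 0 (-1)) := rfl
  refine (isCliffordFamily_pauliMat.fromBlocks_antidiag.map f).cons ?_ fun k => ?_
  · rw [smul_mul_smul, ← sq, hs, one_smul, hβ, ← map_mul, fromBlocks_one_neg_one_mul_self, map_one]
  · rw [smul_mul_assoc, mul_smul_comm, ← smul_add, hβ, Function.comp_apply, ← map_mul, ← map_mul,
      ← map_add, fromBlocks_one_neg_one_anticomm, map_zero, smul_zero]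

theorem hdot_eq_dotProduct (w u : Fin 4 → ℂ) : hdot w u = w ⬝ᵥ star u := rfl

theorem dirac_bilinear_estimate (u z : Fin 4 → ℂ) (s : ℝ) (hs : s = 1 ∨ s = -1) :
    s * (hdot (DiracBeta.mulVec z) z).re * (hdot (DiracBeta.mulVec u) u).re
      + ∑ k : Fin 3,
          (hdot ((DiracAlpha k).mulVec z) z).re * (hdot ((DiracAlpha k).mulVec u) u).re
      ≤ (∑ i, ‖z i‖ ^ 2) * (∑ i, ‖u i‖ ^ 2) := by
  have hs2 : s ^ 2 = 1 := by rcases hs with rfl | rfl <;> norm_num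
  have hz := (isCliffordFamily_diracFamily hs2).sqrt_sum_sq_re_le (isHermitian_diracFamily s) z
  have hu := (isCliffordFamily_diracFamily (one_pow 2)).sum_mul_re_le (isHermitian_diracFamily 1)
    (fun i => RCLike.re ((diracFamily s i *ᵥ z) ⬝ᵥ star z)) u
  refine (Eq.trans_le ?_ hu).trans (mul_le_mul_of_nonneg_right hz (by positivity))
  conv_rhs => rw [Fin.sum_univ_succ]
  simp only [diracFamily, Fin.cons_zero, Fin.cons_succ, one_smul, hdot_eq_dotProduct, smul_mulVec,
    smul_dotProduct, RCLike.smul_re, RCLike.re_to_complex]
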